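/- arXiv:2605.19709 — 4 statements merged into one kernel-verified Lean document; each statement's English description precedes it below -/
import Mathlib

section
/- Suppose there exist C > 1, γ ∈ [0,1) and a current-mode-independent memory controller Ψ such that ‖φ(k, σ, x₀, Ψ)‖ ≤ C γ^k ‖x₀‖ for all x₀, σ, k. Then the value function V(x₀) = inf over memory controllers Ψ' of sup over σ of Σ_{k=0}^∞ ‖φ(k, σ, x₀, Ψ')‖ is absolutely homogeneous of degree one: V(λ x) = |λ| V(x) for all λ ∈ ℝ and all x ∈ ℝⁿ. -/
open Matrix Filter ENNReal

noncomputable section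

/-- State history `[x(k), …, x(0)]` of the closed loop driven by the reversed
mode list `[i_{k-1}, …, i_0]`, under a current-mode-independent memory controller `Ψ`. -/
def memHist {n m : ℕ} {S : Type*} (A : S → Matrix (Fin n) (Fin n) ℝ)
    (B : S → Matrix (Fin n) (Fin m) ℝ)
    (Ψ : List (EuclideanSpace ℝ (Fin n)) → List S → EuclideanSpace ℝ (Fin m))
    (x0 : EuclideanSpace ℝ (Fin n)) : List S → List (EuclideanSpace ℝ (Fin n))
  | [] => [x0]
  | i :: is =>
      WithLp.toLp 2 ((A i).mulVec ((memHist A B Ψ x0 is).headD 0) +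
        (B i).mulVec (Ψ (memHist A B Ψ x0 is) is)) :: memHist A B Ψ x0 is

/-- Closed-loop solution `φ(k, σ, x0, Ψ)` under the switching signal `σ`:
at each step, `Ψ` receives the current and past states `(x(k), …, x(0))`
and the past modes `(σ(k-1), …, σ(0))`. -/
def memTraj {n m : ℕ} {S : Type*} (A : S → Matrix (Fin n) (Fin n) ℝ)
    (B : S → Matrix (Fin n) (Fin m) ℝ)
    (Ψ : List (EuclideanSpace ℝ (Fin n)) → List S → EuclideanSpace ℝ (Fin m))
    (x0 : EuclideanSpace ℝ (Fin n)) (σ : ℕ → S) (k : ℕ) : EuclideanSpace ℝ (Fin n) :=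
  (memHist A B Ψ x0 (((List.range k).reverse).map σ)).headD 0

/-- The value function `V(x₀) = inf_Ψ sup_σ Σₖ ‖φ(k, σ, x₀, Ψ)‖`
(computed in `ℝ≥0∞` and converted to a real number). -/
def valFun {n m : ℕ} {S : Type*} (A : S → Matrix (Fin n) (Fin n) ℝ)
    (B : S → Matrix (Fin n) (Fin m) ℝ) (x0 : EuclideanSpace ℝ (Fin n)) : ℝ :=
  (⨅ Ψ : List (EuclideanSpace ℝ (Fin n)) → List S → EuclideanSpace ℝ (Fin m),
    ⨆ σ : ℕ → S, ∑' k : ℕ, (‖memTraj A B Ψ x0 σ k‖₊ : ℝ≥0∞)).toReal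

/-!
Rescaling a controller by `c` (feed it the history divided by `c`, multiply its output by `c`)
turns, by linearity of the dynamics, each closed-loop trajectory from `x₀` into `c` times the
trajectory from `c • x₀`, so the worst-case cost of every controller gets multiplied by `|c|`.
For `c ≠ 0` rescaling by `c⁻¹` undoes this, so the infimum over controllers scales by `|c|` too.
-/

abbrev MemController (n m : ℕ) (S : Type*) :=
  List (EuclideanSpace ℝ (Fin n)) → List S → EuclideanSpace ℝ (Fin m)

theorem List.headD_map_smul {R M : Type*} [Zero R] [Zero M] [SMulWithZero R M] (c : R)
    (l : List M) : (l.map (c • ·)).headD 0 = c • l.headD 0 := by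
  cases l <;> simp

namespace MemController

variable {n m : ℕ} {S : Type*}

def rescale (c : ℝ) (Ψ : MemController n m S) : MemController n m S :=
  fun hist ms => c • Ψ (hist.map (c⁻¹ • ·)) ms

def cost (A : S → Matrix (Fin n) (Fin n) ℝ) (B : S → Matrix (Fin n) (Fin m) ℝ)
    (Ψ : MemController n m S) (x0 : EuclideanSpace ℝ (Fin n)) : ℝ≥0∞ :=
  ⨆ σ : ℕ → S, ∑' k : ℕ, (‖memTraj A B Ψ x0 σ k‖₊ : ℝ≥0∞)

def optCost (A : S → Matrix (Fin n) (Fin n) ℝ) (B : S → Matrix (Fin n) (Fin m) ℝ)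
    (x0 : EuclideanSpace ℝ (Fin n)) : ℝ≥0∞ :=
  ⨅ Ψ : MemController n m S, cost A B Ψ x0

variable (A : S → Matrix (Fin n) (Fin n) ℝ) (B : S → Matrix (Fin n) (Fin m) ℝ)

theorem valFun_eq_toReal_optCost (x0 : EuclideanSpace ℝ (Fin n)) :
    valFun A B x0 = (optCost A B x0).toReal :=
  rfl

theorem memHist_rescale (c : ℝ) (Ψ : MemController n m S) (x0 : EuclideanSpace ℝ (Fin n))
    (is : List S) :
    memHist A B (Ψ.rescale c) (c • x0) is = (memHist A B Ψ x0 is).map (c • ·) := by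
  induction is with
  | nil => simp [memHist]
  | cons i is ih =>
    -- at `c = 0` both sides vanish, so no inverse is needed
    have hinput : Ψ.rescale c ((memHist A B Ψ x0 is).map (c • ·)) is
        = c • Ψ (memHist A B Ψ x0 is) is := by
      rcases eq_or_ne c 0 with rfl | hc
      · simp [rescale]
      · simp [rescale, List.map_map, Function.comp_def, inv_smul_smul₀ hc]
    simp only [memHist, ih, hinput, List.headD_map_smul, List.map_cons, WithLp.ofLp_smul,
      mulVec_smul, ← smul_add, WithLp.toLp_smul]

theorem memTraj_rescale (c : ℝ) (Ψ : MemController n m S) (x0 : EuclideanSpace ℝ (Fin n))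
    (σ : ℕ → S) (k : ℕ) :
    memTraj A B (Ψ.rescale c) (c • x0) σ k = c • memTraj A B Ψ x0 σ k := by
  rw [memTraj, memTraj, memHist_rescale, List.headD_map_smul]

theorem cost_rescale (c : ℝ) (Ψ : MemController n m S) (x0 : EuclideanSpace ℝ (Fin n)) :
    cost A B (Ψ.rescale c) (c • x0) = ‖c‖₊ * cost A B Ψ x0 := by
  simp only [cost, memTraj_rescale, nnnorm_smul, ENNReal.coe_mul, ENNReal.tsum_mul_left,
    ENNReal.mul_iSup]

theorem optCost_smul_le {c : ℝ} (hc : c ≠ 0) (x0 : EuclideanSpace ℝ (Fin n)) :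
    optCost A B (c • x0) ≤ ‖c‖₊ * optCost A B x0 := by
  rw [optCost, optCost, ENNReal.mul_iInf_of_ne (by simpa using hc) ENNReal.coe_ne_top]
  exact le_iInf fun Ψ => (iInf_le _ (Ψ.rescale c)).trans_eq (cost_rescale A B c Ψ x0)

theorem optCost_smul (c : ℝ) (x0 : EuclideanSpace ℝ (Fin n)) :
    optCost A B (c • x0) = ‖c‖₊ * optCost A B x0 := by
  rcases eq_or_ne c 0 with rfl | hc
  · have hzero : cost A B ((0 : MemController n m S).rescale 0) ((0 : ℝ) • x0) = 0 := by
      rw [cost_rescale]; simp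
    rw [nnnorm_zero, ENNReal.coe_zero, zero_mul]
    exact le_antisymm ((iInf_le (fun Ψ => cost A B Ψ ((0 : ℝ) • x0)) _).trans_eq hzero) zero_le
  refine le_antisymm (optCost_smul_le A B hc x0) ?_
  calc (‖c‖₊ : ℝ≥0∞) * optCost A B x0
      = ‖c‖₊ * optCost A B (c⁻¹ • c • x0) := by rw [inv_smul_smul₀ hc]
    _ ≤ ‖c‖₊ * (‖c⁻¹‖₊ * optCost A B (c • x0)) := by
      gcongr; exact optCost_smul_le A B (inv_ne_zero hc) _
    _ = optCost A B (c • x0) := by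
      rw [← mul_assoc, ← ENNReal.coe_mul, ← nnnorm_mul, mul_inv_cancel₀ hc, nnnorm_one,
        ENNReal.coe_one, one_mul]

end MemController

theorem valFun_abs_homogeneous_general {n m : ℕ} {S : Type*}
    (A : S → Matrix (Fin n) (Fin n) ℝ) (B : S → Matrix (Fin n) (Fin m) ℝ) :
    ∀ (lam : ℝ) (x : EuclideanSpace ℝ (Fin n)),
      valFun A B (lam • x) = |lam| * valFun A B x := by
  intro lam x
  rw [MemController.valFun_eq_toReal_optCost, MemController.valFun_eq_toReal_optCost,
    MemController.optCost_smul, ENNReal.toReal_mul]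
  simp

/-- Under exponential stabilizability by a memory controller,
the value function is absolutely homogeneous of degree one. -/
theorem valFun_abs_homogeneous {n m : ℕ} (hn : 0 < n) (hm : 0 < m) {S : Type*} [Fintype S] [Nonempty S]
    (A : S → Matrix (Fin n) (Fin n) ℝ) (B : S → Matrix (Fin n) (Fin m) ℝ)
    (C γ : ℝ) (hC : 1 < C) (hγ : γ ∈ Set.Ico (0 : ℝ) 1)
    (Ψ : List (EuclideanSpace ℝ (Fin n)) → List S → EuclideanSpace ℝ (Fin m))
    (hΨ : ∀ (x0 : EuclideanSpace ℝ (Fin n)) (σ : ℕ → S) (k : ℕ),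
      ‖memTraj A B Ψ x0 σ k‖ ≤ C * γ ^ k * ‖x0‖) :
    ∀ (lam : ℝ) (x : EuclideanSpace ℝ (Fin n)),
      valFun A B (lam • x) = |lam| * valFun A B x :=
  valFun_abs_homogeneous_general A B
end
end

section
/- Let z₁, z₂ ∈ ℝⁿ and let Ψ₁, Ψ₂ be current-mode-independent memory controllers. Define the memory controller Ψ by Ψ(y_k, …, y_0; i_{k−1}, …, i_0) = Ψ₁(φ(k, ī, z₁, Ψ₁), …, z₁; i_{k−1}, …, i_0) + Ψ₂(φ(k, ī, z₂, Ψ₂), …, z₂; i_{k−1}, …, i_0), where the closed-loop trajectories from z₁ and z₂ are computed along the switching history (i_0, …, i_{k−1}). Then for every switching signal σ : ℕ → Σ and every k ∈ ℕ, φ(k, σ, z₁ + z₂, Ψ) = φ(k, σ, z₁, Ψ₁) + φ(k, σ, z₂, Ψ₂). -/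
/- Superposition: the controller `Ψ` feeds the sum of the two inputs that `Ψ₁` and `Ψ₂` apply along
the same mode history, so by linearity of `x ↦ A x + B u` the state from `z₁ + z₂` stays the sum of the
two closed-loop states, by induction on the history. -/

open Matrix Filter ENNReal

noncomputable section

theorem headD_memHist_add {n m : ℕ} {S : Type*}
    (A : S → Matrix (Fin n) (Fin n) ℝ) (B : S → Matrix (Fin n) (Fin m) ℝ)
    (z1 z2 : EuclideanSpace ℝ (Fin n))
    (Ψ1 Ψ2 Ψ : List (EuclideanSpace ℝ (Fin n)) → List S → EuclideanSpace ℝ (Fin m))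
    (hΨ : ∀ ys is, Ψ ys is = Ψ1 (memHist A B Ψ1 z1 is) is + Ψ2 (memHist A B Ψ2 z2 is) is)
    (is : List S) :
    (memHist A B Ψ (z1 + z2) is).headD 0 =
      (memHist A B Ψ1 z1 is).headD 0 + (memHist A B Ψ2 z2 is).headD 0 := by
  induction is with
  | nil => rfl
  | cons i is ih =>
    simp only [memHist, List.headD_cons, ih, hΨ, WithLp.ofLp_add, mulVec_add, ← WithLp.toLp_add]
    rw [add_add_add_comm]

theorem memTraj_add_general {n m : ℕ} {S : Type*}
    (A : S → Matrix (Fin n) (Fin n) ℝ) (B : S → Matrix (Fin n) (Fin m) ℝ)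
    (z1 z2 : EuclideanSpace ℝ (Fin n))
    (Ψ1 Ψ2 Ψ : List (EuclideanSpace ℝ (Fin n)) → List S → EuclideanSpace ℝ (Fin m))
    (hΨ : ∀ (ys : List (EuclideanSpace ℝ (Fin n))) (is : List S),
      Ψ ys is = Ψ1 (memHist A B Ψ1 z1 is) is + Ψ2 (memHist A B Ψ2 z2 is) is) :
    ∀ (σ : ℕ → S) (k : ℕ),
      memTraj A B Ψ (z1 + z2) σ k = memTraj A B Ψ1 z1 σ k + memTraj A B Ψ2 z2 σ k :=
  fun _ _ => headD_memHist_add A B z1 z2 Ψ1 Ψ2 Ψ hΨ _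

/-- The superposition controller reproduces the sum of the two
closed-loop trajectories: `φ(k, σ, z₁+z₂, Ψ) = φ(k, σ, z₁, Ψ₁) + φ(k, σ, z₂, Ψ₂)`. -/
theorem memTraj_add {n m : ℕ} (hn : 0 < n) (hm : 0 < m) {S : Type*} [Fintype S] [Nonempty S]
    (A : S → Matrix (Fin n) (Fin n) ℝ) (B : S → Matrix (Fin n) (Fin m) ℝ)
    (z1 z2 : EuclideanSpace ℝ (Fin n))
    (Ψ1 Ψ2 Ψ : List (EuclideanSpace ℝ (Fin n)) → List S → EuclideanSpace ℝ (Fin m))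
    (hΨ : ∀ (ys : List (EuclideanSpace ℝ (Fin n))) (is : List S),
      Ψ ys is = Ψ1 (memHist A B Ψ1 z1 is) is + Ψ2 (memHist A B Ψ2 z2 is) is) :
    ∀ (σ : ℕ → S) (k : ℕ),
      memTraj A B Ψ (z1 + z2) σ k = memTraj A B Ψ1 z1 σ k + memTraj A B Ψ2 z2 σ k :=
  memTraj_add_general A B z1 z2 Ψ1 Ψ2 Ψ hΨ
end
end

section
/- Suppose there exist C > 1, γ ∈ [0,1) and a current-mode-independent memory controller Ψ such that ‖φ(k, σ, x₀, Ψ)‖ ≤ C γ^k ‖x₀‖ for all x₀, σ, k. Then the value function V(x₀) = inf over memory controllers Ψ' of sup over σ of Σ_{k=0}^∞ ‖φ(k, σ, x₀, Ψ')‖ is subadditive: V(z₁ + z₂) ≤ V(z₁) + V(z₂) for all z₁, z₂ ∈ ℝⁿ. -/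
/-! Superposition: if `Ψ₁` steers `z₁` and `Ψ₂` steers `z₂`, the controller that simulates
both closed loops along the observed modes and applies the sum of their inputs steers
`z₁ + z₂` along the sum of the two trajectories, since the dynamics are linear. By the
triangle inequality its worst-case cost is at most the sum of the two worst-case costs, so
the `ℝ≥0∞`-valued optimal cost is subadditive. Exponential stabilizability bounds that cost
by a geometric series, so it is finite and subadditivity survives the passage to `ℝ`. -/

open Matrix Filter ENNReal

noncomputable section

namespace MemoryController

variable {n m : ℕ} {S : Type*} (A : S → Matrix (Fin n) (Fin n) ℝ)
  (B : S → Matrix (Fin n) (Fin m) ℝ)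

def worstCaseCost (Ψ : List (EuclideanSpace ℝ (Fin n)) → List S → EuclideanSpace ℝ (Fin m))
    (x0 : EuclideanSpace ℝ (Fin n)) : ℝ≥0∞ :=
  ⨆ σ : ℕ → S, ∑' k : ℕ, (‖memTraj A B Ψ x0 σ k‖₊ : ℝ≥0∞)

def optimalCost (x0 : EuclideanSpace ℝ (Fin n)) : ℝ≥0∞ :=
  ⨅ Ψ : List (EuclideanSpace ℝ (Fin n)) → List S → EuclideanSpace ℝ (Fin m),
    worstCaseCost A B Ψ x0

theorem valFun_eq_toReal_optimalCost (x0 : EuclideanSpace ℝ (Fin n)) :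
    valFun A B x0 = (optimalCost A B x0).toReal :=
  rfl

def superposedController
    (Ψ₁ Ψ₂ : List (EuclideanSpace ℝ (Fin n)) → List S → EuclideanSpace ℝ (Fin m))
    (z₁ z₂ : EuclideanSpace ℝ (Fin n)) :
    List (EuclideanSpace ℝ (Fin n)) → List S → EuclideanSpace ℝ (Fin m) :=
  fun _ is => Ψ₁ (memHist A B Ψ₁ z₁ is) is + Ψ₂ (memHist A B Ψ₂ z₂ is) is

variable (Ψ₁ Ψ₂ : List (EuclideanSpace ℝ (Fin n)) → List S → EuclideanSpace ℝ (Fin m))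
  (z₁ z₂ : EuclideanSpace ℝ (Fin n))

theorem headD_memHist_superposedController (is : List S) :
    (memHist A B (superposedController A B Ψ₁ Ψ₂ z₁ z₂) (z₁ + z₂) is).headD 0 =
      (memHist A B Ψ₁ z₁ is).headD 0 + (memHist A B Ψ₂ z₂ is).headD 0 := by
  induction is with
  | nil => rfl
  | cons i is ih =>
    simp only [memHist, List.headD_cons, superposedController]
    rw [ih, WithLp.ofLp_add, WithLp.ofLp_add, mulVec_add, mulVec_add, ← WithLp.toLp_add]
    abel_nf

theorem memTraj_superposedController (σ : ℕ → S) (k : ℕ) :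
    memTraj A B (superposedController A B Ψ₁ Ψ₂ z₁ z₂) (z₁ + z₂) σ k =
      memTraj A B Ψ₁ z₁ σ k + memTraj A B Ψ₂ z₂ σ k :=
  headD_memHist_superposedController A B Ψ₁ Ψ₂ z₁ z₂ _

theorem worstCaseCost_superposedController_le :
    worstCaseCost A B (superposedController A B Ψ₁ Ψ₂ z₁ z₂) (z₁ + z₂) ≤
      worstCaseCost A B Ψ₁ z₁ + worstCaseCost A B Ψ₂ z₂ := by
  refine iSup_le fun σ => ?_
  calc ∑' k, (‖memTraj A B (superposedController A B Ψ₁ Ψ₂ z₁ z₂) (z₁ + z₂) σ k‖₊ : ℝ≥0∞)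
      ≤ ∑' k, ((‖memTraj A B Ψ₁ z₁ σ k‖₊ : ℝ≥0∞) + ‖memTraj A B Ψ₂ z₂ σ k‖₊) :=
        ENNReal.tsum_le_tsum fun k => by
          rw [memTraj_superposedController]
          exact_mod_cast nnnorm_add_le _ _
    _ = ∑' k, (‖memTraj A B Ψ₁ z₁ σ k‖₊ : ℝ≥0∞) + ∑' k, (‖memTraj A B Ψ₂ z₂ σ k‖₊ : ℝ≥0∞) :=
        ENNReal.tsum_add
    _ ≤ worstCaseCost A B Ψ₁ z₁ + worstCaseCost A B Ψ₂ z₂ :=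
        add_le_add (le_iSup (fun σ => ∑' k, (‖memTraj A B Ψ₁ z₁ σ k‖₊ : ℝ≥0∞)) σ)
          (le_iSup (fun σ => ∑' k, (‖memTraj A B Ψ₂ z₂ σ k‖₊ : ℝ≥0∞)) σ)

theorem optimalCost_add_le :
    optimalCost (m := m) A B (z₁ + z₂) ≤ optimalCost (m := m) A B z₁ + optimalCost A B z₂ :=
  ENNReal.le_iInf_add_iInf fun Ψ₁ Ψ₂ =>
    (iInf_le _ _).trans (worstCaseCost_superposedController_le A B Ψ₁ Ψ₂ z₁ z₂)

theorem worstCaseCost_le_ofReal_tsum {b : ℕ → ℝ} (hb : Summable b) (hb0 : ∀ k, 0 ≤ b k)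
    (h : ∀ σ k, ‖memTraj A B Ψ₁ z₁ σ k‖ ≤ b k) :
    worstCaseCost A B Ψ₁ z₁ ≤ ENNReal.ofReal (∑' k, b k) := by
  rw [ENNReal.ofReal_tsum_of_nonneg hb0 hb]
  refine iSup_le fun σ => ENNReal.tsum_le_tsum fun k => ?_
  exact (ofReal_norm _).symm.trans_le (ENNReal.ofReal_le_ofReal (h σ k))

end MemoryController

open MemoryController in
theorem valFun_subadditive_general {n m : ℕ} {S : Type*}
    (A : S → Matrix (Fin n) (Fin n) ℝ) (B : S → Matrix (Fin n) (Fin m) ℝ)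
    (C γ : ℝ) (hC : 1 < C) (hγ : γ ∈ Set.Ico (0 : ℝ) 1)
    (Ψ : List (EuclideanSpace ℝ (Fin n)) → List S → EuclideanSpace ℝ (Fin m))
    (hΨ : ∀ (x0 : EuclideanSpace ℝ (Fin n)) (σ : ℕ → S) (k : ℕ),
      ‖memTraj A B Ψ x0 σ k‖ ≤ C * γ ^ k * ‖x0‖) :
    ∀ z1 z2 : EuclideanSpace ℝ (Fin n),
      valFun A B (z1 + z2) ≤ valFun A B z1 + valFun A B z2 := by
  have hfinite : ∀ x0, optimalCost (m := m) A B x0 ≠ ⊤ := fun x0 =>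
    ne_top_of_le_ne_top ofReal_ne_top <| (iInf_le _ Ψ).trans <|
      worstCaseCost_le_ofReal_tsum A B Ψ x0
        (((summable_geometric_of_lt_one hγ.1 hγ.2).mul_left C).mul_right ‖x0‖)
        (fun k => mul_nonneg (mul_nonneg (by linarith) (pow_nonneg hγ.1 k)) (norm_nonneg x0)) (hΨ x0)
  intro z1 z2
  simp only [valFun_eq_toReal_optimalCost]
  exact toReal_le_add (optimalCost_add_le A B z1 z2) (hfinite z1) (hfinite z2)

/-- Under exponential stabilizability by a memory controller,
the value function is subadditive. -/
theorem valFun_subadditive {n m : ℕ} (hn : 0 < n) (hm : 0 < m) {S : Type*} [Fintype S] [Nonempty S]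
    (A : S → Matrix (Fin n) (Fin n) ℝ) (B : S → Matrix (Fin n) (Fin m) ℝ)
    (C γ : ℝ) (hC : 1 < C) (hγ : γ ∈ Set.Ico (0 : ℝ) 1)
    (Ψ : List (EuclideanSpace ℝ (Fin n)) → List S → EuclideanSpace ℝ (Fin m))
    (hΨ : ∀ (x0 : EuclideanSpace ℝ (Fin n)) (σ : ℕ → S) (k : ℕ),
      ‖memTraj A B Ψ x0 σ k‖ ≤ C * γ ^ k * ‖x0‖) :
    ∀ z1 z2 : EuclideanSpace ℝ (Fin n),
      valFun A B (z1 + z2) ≤ valFun A B z1 + valFun A B z2 :=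
  valFun_subadditive_general A B C γ hC hγ Ψ hΨ
end
end

section
/- Suppose there exist C > 1, γ ∈ [0,1) and a current-mode-independent memory controller Ψ such that ‖φ(k, σ, x₀, Ψ)‖ ≤ C γ^k ‖x₀‖ for all x₀, σ, k. Then the value function V satisfies the dynamic programming (Bellman) equation V(x) = ‖x‖ + min_{u ∈ ℝ^m} max_{i ∈ Σ} V(A_i x + B_i u) for all x ∈ ℝⁿ, where the minimum over u ∈ ℝ^m is attained. -/
open Matrix Filter ENNReal

noncomputable section

/-!
The Bellman equation is first proved for the `ℝ≥0∞`-valued value function, where it needs no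
assumption: a controller splits into its first input and the controllers it induces once the
first mode is known, and conversely `ε`-optimal controllers from the successor states glue
into one from `x`. The stabilizing controller bounds the cost linearly, `V x ≤ K ‖x‖`, so `V`
is finite; running any controller from `z` superposed with the stabilizing one from `y - z`
(the dynamics are linear) shows that `V` is `K`-Lipschitz. As also `‖x‖ ≤ V x`, the map
`u ↦ max_i V (A_i x + B_i u)` is a continuous coercive function of `(B_i u)_i`, which ranges
over a finite-dimensional subspace, so its infimum is attained.
-/

open scoped NNReal

local notation "𝔼" k:max => EuclideanSpace ℝ (Fin k)

section Generic

theorem ENNReal.exists_le_iInf_add {ι : Sort*} [Nonempty ι] (f : ι → ℝ≥0∞) {ε : ℝ≥0∞}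
    (hε : ε ≠ 0) : ∃ i, f i ≤ (⨅ i, f i) + ε := by
  by_cases h : ⨅ i, f i = ⊤
  · simp [h]
  · obtain ⟨i, hi⟩ := iInf_lt_iff.1 (ENNReal.lt_add_right h hε)
    exact ⟨i, hi.le⟩

theorem Continuous.ciSup_of_fintype {ι X : Type*} [Fintype ι] [Nonempty ι] [TopologicalSpace X]
    {f : ι → X → ℝ} (hf : ∀ i, Continuous (f i)) : Continuous fun x => ⨆ i, f i x := by
  simp_rw [← Finset.sup'_univ_eq_ciSup]
  exact Continuous.finset_sup'_apply _ fun i _ => hf i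

theorem LinearMap.exists_forall_le_comp {F G : Type*} [AddCommGroup F] [Module ℝ F]
    [NormedAddCommGroup G] [NormedSpace ℝ G] [FiniteDimensional ℝ G] (L : F →ₗ[ℝ] G)
    {f : G → ℝ} (hf : Continuous f) (hcoer : Tendsto f (cocompact G) atTop) :
    ∃ u, ∀ v, f (L u) ≤ f (L v) := by
  have hemb := (LinearMap.range L).closed_of_finiteDimensional.isClosedEmbedding_subtypeVal
  obtain ⟨⟨_, u, rfl⟩, hu⟩ := (hf.comp hemb.continuous).exists_forall_le
    (hcoer.comp hemb.tendsto_cocompact)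
  exact ⟨u, fun v => hu ⟨L v, v, rfl⟩⟩

theorem tendsto_ciSup_comp_add_cocompact {ι E : Type*} [Fintype ι] [NormedAddCommGroup E]
    [ProperSpace E] {V : E → ℝ} (hV : ∀ y, ‖y‖ ≤ V y) (a : ι → E) :
    Tendsto (fun w : ι → E => ⨆ i, V (a i + w i)) (cocompact (ι → E)) atTop := by
  have hbound : ∀ w : ι → E, ‖w‖ + -‖a‖ ≤ ⨆ i, V (a i + w i) := by
    intro w
    have hle : ∀ i, ‖a i + w i‖ ≤ ⨆ i, V (a i + w i) := fun i =>
      (hV _).trans (le_ciSup (f := fun i => V (a i + w i)) (Set.finite_range _).bddAbove i)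
    have hsup : ‖a + w‖ ≤ ⨆ i, V (a i + w i) :=
      (pi_norm_le_iff_of_nonneg (Real.iSup_nonneg fun i => (norm_nonneg _).trans (hV _))).2 hle
    calc ‖w‖ + -‖a‖ = ‖(a + w) - a‖ - ‖a‖ := by rw [add_sub_cancel_left, sub_eq_add_neg]
      _ ≤ ‖a + w‖ := by linarith [norm_sub_le (a + w) a]
      _ ≤ _ := hsup
  exact tendsto_atTop_mono hbound (tendsto_atTop_add_const_right _ _ tendsto_norm_cocompact_atTop)

end Generic

section ClosedLoop

variable {n m : ℕ} {S : Type*}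

abbrev Controller (n m : ℕ) (S : Type*) := List (𝔼 n) → List S → 𝔼 m

/-- The controller seen from time `1` on, after the state `x` and the mode `i` at time `0`. -/
def Controller.shift (Ψ : Controller n m S) (x : 𝔼 n) (i : S) : Controller n m S :=
  fun h ms => Ψ (h ++ [x]) (ms ++ [i])

variable (A : S → Matrix (Fin n) (Fin n) ℝ) (B : S → Matrix (Fin n) (Fin m) ℝ)

def step (x : 𝔼 n) (u : 𝔼 m) (i : S) : 𝔼 n :=
  WithLp.toLp 2 ((A i).mulVec x + (B i).mulVec u)

theorem memHist_ne_nil (Ψ : Controller n m S) (x : 𝔼 n) (l : List S) :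
    memHist A B Ψ x l ≠ [] := by
  cases l <;> simp [memHist]

theorem memHist_length (Ψ : Controller n m S) (x : 𝔼 n) (l : List S) :
    (memHist A B Ψ x l).length = l.length + 1 := by
  induction l with
  | nil => rfl
  | cons i l ih => simp [memHist, ih]

theorem List.headD_append_of_ne_nil {α : Type*} {L : List α} (d x : α) (h : L ≠ []) :
    (L ++ [x]).headD d = L.headD d := by
  cases L with
  | nil => exact absurd rfl h
  | cons a t => rfl

theorem memHist_append_singleton (Ψ : Controller n m S) (x : 𝔼 n) (i : S) (l : List S) :
    memHist A B Ψ x (l ++ [i]) =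
      memHist A B (Ψ.shift x i) (step A B x (Ψ [x] []) i) l ++ [x] := by
  induction l with
  | nil => rfl
  | cons j l ih =>
    simp only [List.cons_append, memHist, ih,
      List.headD_append_of_ne_nil _ _ (memHist_ne_nil A B _ _ _)]
    rfl

theorem memTraj_zero (Ψ : Controller n m S) (x : 𝔼 n) (σ : ℕ → S) :
    memTraj A B Ψ x σ 0 = x := rfl

theorem memTraj_succ (Ψ : Controller n m S) (x : 𝔼 n) (σ : ℕ → S) (k : ℕ) :
    memTraj A B Ψ x σ (k + 1) =
      memTraj A B (Ψ.shift x (σ 0)) (step A B x (Ψ [x] []) (σ 0)) (fun j => σ (j + 1)) k := by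
  have hmodes : ((List.range (k + 1)).reverse).map σ =
      ((List.range k).reverse).map (fun j => σ (j + 1)) ++ [σ 0] := by
    simp [List.range_succ_eq_map, List.map_reverse, Function.comp_def]
  rw [memTraj, hmodes, memHist_append_singleton,
    List.headD_append_of_ne_nil _ _ (memHist_ne_nil A B _ _ _)]
  rfl

end ClosedLoop

section Value

variable {n m : ℕ} {S : Type*}

/-- Plays `u` at time `0` and, once the mode `i` of time `0` is known, continues as `Φ i`. -/
def Controller.glue (u : 𝔼 m) (Φ : S → Controller n m S) : Controller n m S :=
  fun h ms => ms.getLast?.elim u fun i => Φ i h.dropLast ms.dropLast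

theorem Controller.glue_apply_init (u : 𝔼 m) (Φ : S → Controller n m S) (x : 𝔼 n) :
    glue u Φ [x] [] = u := rfl

theorem Controller.shift_glue (u : 𝔼 m) (Φ : S → Controller n m S) (x : 𝔼 n) (i : S) :
    (glue u Φ).shift x i = Φ i := by
  funext h ms
  simp [shift, glue]

variable (A : S → Matrix (Fin n) (Fin n) ℝ) (B : S → Matrix (Fin n) (Fin m) ℝ)

def cost (Ψ : Controller n m S) (x : 𝔼 n) (σ : ℕ → S) : ℝ≥0∞ :=
  ∑' k, (‖memTraj A B Ψ x σ k‖₊ : ℝ≥0∞)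

def eValFun (x : 𝔼 n) : ℝ≥0∞ :=
  ⨅ Ψ : Controller n m S, ⨆ σ, cost A B Ψ x σ

theorem valFun_eq_toReal_eValFun (x : 𝔼 n) : valFun A B x = (eValFun A B x).toReal := rfl

theorem cost_eq_nnnorm_add_cost_shift (Ψ : Controller n m S) (x : 𝔼 n) (σ : ℕ → S) :
    cost A B Ψ x σ = ‖x‖₊ +
      cost A B (Ψ.shift x (σ 0)) (step A B x (Ψ [x] []) (σ 0)) (fun k => σ (k + 1)) := by
  rw [cost, tsum_eq_zero_add' ENNReal.summable, memTraj_zero]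
  simp only [cost, memTraj_succ]

theorem nnnorm_le_eValFun [Nonempty S] (x : 𝔼 n) : (‖x‖₊ : ℝ≥0∞) ≤ eValFun A B x :=
  le_iInf fun _ => (le_iSup_of_le (fun _ => Classical.arbitrary S) (ENNReal.le_tsum 0))

theorem nnnorm_add_iInf_iSup_le_eValFun [Nonempty S] (x : 𝔼 n) :
    ‖x‖₊ + ⨅ u, ⨆ i, eValFun A B (step A B x u i) ≤ eValFun A B x := by
  refine le_iInf fun Ψ => ?_
  calc ‖x‖₊ + ⨅ u, ⨆ i, eValFun A B (step A B x u i)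
      ≤ ‖x‖₊ + ⨆ i, eValFun A B (step A B x (Ψ [x] []) i) := by
        gcongr
        exact iInf_le (fun u => ⨆ i, eValFun A B (step A B x u i)) _
    _ ≤ ‖x‖₊ + ⨆ i, ⨆ σ, cost A B (Ψ.shift x i) (step A B x (Ψ [x] []) i) σ := by
      gcongr with i
      exact iInf_le (fun Ψ' => ⨆ σ, cost A B Ψ' _ σ) _
    _ = ⨆ i, ⨆ σ, ‖x‖₊ + cost A B (Ψ.shift x i) (step A B x (Ψ [x] []) i) σ := by
      simp only [ENNReal.add_iSup]
    _ ≤ ⨆ σ, cost A B Ψ x σ := by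
      refine iSup₂_le fun i σ => ?_
      let σ' : ℕ → S := fun | 0 => i | k + 1 => σ k
      exact (cost_eq_nnnorm_add_cost_shift A B Ψ x σ').symm ▸ le_iSup _ σ'

theorem eValFun_le_nnnorm_add_iInf_iSup (x : 𝔼 n) :
    eValFun A B x ≤ ‖x‖₊ + ⨅ u, ⨆ i, eValFun A B (step A B x u i) := by
  rw [ENNReal.add_iInf]
  refine le_iInf fun u => ENNReal.le_of_forall_pos_le_add fun ε hε _ => ?_
  choose Φ hΦ using fun i => ENNReal.exists_le_iInf_add
    (fun Ψ => ⨆ σ, cost A B Ψ (step A B x u i) σ) (ε := ε) (by exact_mod_cast hε.ne')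
  refine iInf_le_of_le (Controller.glue u Φ) (iSup_le fun σ => ?_)
  rw [cost_eq_nnnorm_add_cost_shift, Controller.glue_apply_init, Controller.shift_glue, add_assoc]
  gcongr
  calc cost A B (Φ (σ 0)) (step A B x u (σ 0)) (fun k => σ (k + 1))
      ≤ eValFun A B (step A B x u (σ 0)) + ε := (le_iSup _ _).trans (hΦ _)
    _ ≤ (⨆ i, eValFun A B (step A B x u i)) + ε := by
      gcongr
      exact le_iSup (fun i => eValFun A B (step A B x u i)) (σ 0)

theorem eValFun_bellman [Nonempty S] (x : 𝔼 n) :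
    eValFun A B x = ‖x‖₊ + ⨅ u, ⨆ i, eValFun A B (step A B x u i) :=
  (eValFun_le_nnnorm_add_iInf_iSup A B x).antisymm (nnnorm_add_iInf_iSup_le_eValFun A B x)

end Value

section Superposition

variable {n m : ℕ} {S : Type*}
variable (A : S → Matrix (Fin n) (Fin n) ℝ) (B : S → Matrix (Fin n) (Fin m) ℝ)

/-- By linearity, started at `y + z` this controller produces the sum of the closed loops of
`Ψ₁` from `y` and of `Ψ₂` from `z`: it recomputes the second one and feeds `Ψ₁` the difference. -/
def Controller.superpose (Ψ₁ Ψ₂ : Controller n m S) (z : 𝔼 n) : Controller n m S :=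
  fun h ms => Ψ₁ (List.zipWith (· - ·) h (memHist A B Ψ₂ z ms)) ms + Ψ₂ (memHist A B Ψ₂ z ms) ms

theorem List.zipWith_sub_zipWith_add {G : Type*} [AddGroup G] {L M : List G}
    (h : L.length = M.length) : zipWith (· - ·) (zipWith (· + ·) L M) M = L := by
  induction L generalizing M with
  | nil => rfl
  | cons a L ih =>
    cases M with
    | nil => simp at h
    | cons b M => simp_all

theorem List.headD_zipWith_add {G : Type*} [AddZeroClass G] {L M : List G} (hL : L ≠ [])
    (hM : M ≠ []) : (zipWith (· + ·) L M).headD 0 = L.headD 0 + M.headD 0 := by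
  cases L with
  | nil => exact absurd rfl hL
  | cons a L => cases M with
    | nil => exact absurd rfl hM
    | cons b M => rfl

theorem memHist_superpose (Ψ₁ Ψ₂ : Controller n m S) (y z : 𝔼 n) (l : List S) :
    memHist A B (Ψ₁.superpose A B Ψ₂ z) (y + z) l =
      List.zipWith (· + ·) (memHist A B Ψ₁ y l) (memHist A B Ψ₂ z l) := by
  induction l with
  | nil => rfl
  | cons i l ih =>
    simp only [memHist, ih, Controller.superpose]
    rw [List.zipWith_sub_zipWith_add (by rw [memHist_length, memHist_length]),
      List.headD_zipWith_add (memHist_ne_nil A B _ _ _) (memHist_ne_nil A B _ _ _),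
      WithLp.ofLp_add, WithLp.ofLp_add, Matrix.mulVec_add, Matrix.mulVec_add]
    congr 1
    beta_reduce
    rw [← WithLp.toLp_add]
    congr 1
    abel

theorem memTraj_superpose (Ψ₁ Ψ₂ : Controller n m S) (y z : 𝔼 n) (σ : ℕ → S) (k : ℕ) :
    memTraj A B (Ψ₁.superpose A B Ψ₂ z) (y + z) σ k =
      memTraj A B Ψ₁ y σ k + memTraj A B Ψ₂ z σ k := by
  rw [memTraj, memTraj, memTraj, memHist_superpose,
    List.headD_zipWith_add (memHist_ne_nil A B _ _ _) (memHist_ne_nil A B _ _ _)]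

theorem cost_superpose_le (Ψ₁ Ψ₂ : Controller n m S) (y z : 𝔼 n) (σ : ℕ → S) :
    cost A B (Ψ₁.superpose A B Ψ₂ z) (y + z) σ ≤ cost A B Ψ₁ y σ + cost A B Ψ₂ z σ := by
  rw [cost, cost, cost, ← ENNReal.tsum_add]
  refine ENNReal.tsum_le_tsum fun k => ?_
  rw [memTraj_superpose]
  exact_mod_cast nnnorm_add_le _ _

end Superposition

section LinearCostBound

variable {n m : ℕ} {S : Type*}
variable (A : S → Matrix (Fin n) (Fin n) ℝ) (B : S → Matrix (Fin n) (Fin m) ℝ)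

theorem exists_cost_le_of_norm_memTraj_le {Ψ : Controller n m S} {C γ : ℝ}
    (hγ : γ ∈ Set.Ico (0 : ℝ) 1)
    (hΨ : ∀ x σ k, ‖memTraj A B Ψ x σ k‖ ≤ C * γ ^ k * ‖x‖) :
    ∃ K : ℝ≥0, ∀ x σ, cost A B Ψ x σ ≤ K * ‖x‖₊ := by
  have hγ' : ENNReal.ofReal γ < 1 := ENNReal.ofReal_lt_one.2 hγ.2
  refine ⟨(ENNReal.ofReal C * (1 - ENNReal.ofReal γ)⁻¹).toNNReal, fun x σ => ?_⟩
  rw [ENNReal.coe_toNNReal (ENNReal.mul_ne_top ENNReal.ofReal_ne_top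
    (ENNReal.inv_ne_top.2 (tsub_pos_of_lt hγ').ne'))]
  calc cost A B Ψ x σ ≤ ∑' k, ENNReal.ofReal C * ENNReal.ofReal γ ^ k * ‖x‖₊ := by
        refine ENNReal.tsum_le_tsum fun k => ?_
        rw [← enorm_eq_nnnorm, ← enorm_eq_nnnorm, ← ofReal_norm, ← ofReal_norm,
          ← ENNReal.ofReal_pow hγ.1, ← ENNReal.ofReal_mul' (pow_nonneg hγ.1 k),
          ← ENNReal.ofReal_mul' (norm_nonneg _)]
        exact ENNReal.ofReal_le_ofReal (hΨ x σ k)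
    _ = ENNReal.ofReal C * (1 - ENNReal.ofReal γ)⁻¹ * ‖x‖₊ := by
        rw [ENNReal.tsum_mul_right, ENNReal.tsum_mul_left, ENNReal.tsum_geometric]

variable {Ψ : Controller n m S} {K : ℝ≥0} (hK : ∀ x σ, cost A B Ψ x σ ≤ K * ‖x‖₊)
include hK

theorem eValFun_le_mul_nnnorm (x : 𝔼 n) : eValFun A B x ≤ K * ‖x‖₊ :=
  iInf_le_of_le Ψ (iSup_le (hK x))

theorem eValFun_ne_top (x : 𝔼 n) : eValFun A B x ≠ ⊤ :=
  ne_top_of_le_ne_top (by finiteness) (eValFun_le_mul_nnnorm A B hK x)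

theorem eValFun_le_add_mul_nnnorm_sub (y z : 𝔼 n) :
    eValFun A B y ≤ eValFun A B z + K * ‖y - z‖₊ := by
  unfold eValFun
  rw [ENNReal.iInf_add]
  refine le_iInf fun Ψ₁ => iInf_le_of_le (Ψ₁.superpose A B Ψ (y - z)) (iSup_le fun σ => ?_)
  calc cost A B (Ψ₁.superpose A B Ψ (y - z)) y σ
      ≤ cost A B Ψ₁ z σ + cost A B Ψ (y - z) σ := by
        simpa using cost_superpose_le A B Ψ₁ Ψ z (y - z) σ
    _ ≤ (⨆ σ, cost A B Ψ₁ z σ) + K * ‖y - z‖₊ := add_le_add (le_iSup _ σ) (hK _ σ)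

theorem valFun_lipschitzWith : LipschitzWith K (valFun A B) := by
  refine LipschitzWith.of_le_add_mul K fun y z => ?_
  have h := ENNReal.toReal_mono (by finiteness [eValFun_ne_top A B hK z])
    (eValFun_le_add_mul_nnnorm_sub A B hK y z)
  rw [ENNReal.toReal_add (eValFun_ne_top A B hK z) (by finiteness), ENNReal.toReal_mul] at h
  simpa only [valFun_eq_toReal_eValFun, ENNReal.coe_toReal, coe_nnnorm, ← dist_eq_norm] using h

end LinearCostBound

section RealValue

variable {n m : ℕ} {S : Type*} [Nonempty S]
variable (A : S → Matrix (Fin n) (Fin n) ℝ) (B : S → Matrix (Fin n) (Fin m) ℝ)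
variable {Ψ : Controller n m S} {K : ℝ≥0} (hK : ∀ x σ, cost A B Ψ x σ ≤ K * ‖x‖₊)
include hK

theorem norm_le_valFun (x : 𝔼 n) : ‖x‖ ≤ valFun A B x := by
  rw [valFun_eq_toReal_eValFun]
  simpa using ENNReal.toReal_mono (eValFun_ne_top A B hK x) (nnnorm_le_eValFun A B x)

variable [Fintype S]

theorem valFun_eq_norm_add_iInf_iSup (x : 𝔼 n) :
    valFun A B x = ‖x‖ + ⨅ u, ⨆ i, valFun A B (step A B x u i) := by
  have hsup (u : 𝔼 m) : ⨆ i, eValFun A B (step A B x u i) ≠ ⊤ :=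
    iSup_ne_top fun _ => eValFun_ne_top A B hK _
  rw [valFun_eq_toReal_eValFun, eValFun_bellman, ENNReal.toReal_add (by finiteness)
    (ne_top_of_le_ne_top (hsup 0) (iInf_le _ 0)), ENNReal.toReal_iInf hsup]
  simp only [ENNReal.toReal_iSup fun _ => eValFun_ne_top A B hK _, valFun_eq_toReal_eValFun,
    ENNReal.coe_toReal, coe_nnnorm]

theorem exists_iSup_valFun_step_eq_iInf (x : 𝔼 n) :
    ∃ u₀, ⨆ i, valFun A B (step A B x u₀ i) = ⨅ u, ⨆ i, valFun A B (step A B x u i) := by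
  let L : 𝔼 m →ₗ[ℝ] S → 𝔼 n := LinearMap.pi fun i => Matrix.toLpLin 2 2 (B i)
  let a : S → 𝔼 n := fun i => WithLp.toLp 2 ((A i).mulVec x)
  obtain ⟨u₀, hu₀⟩ := L.exists_forall_le_comp
    (Continuous.ciSup_of_fintype fun i =>
      (valFun_lipschitzWith A B hK).continuous.comp (continuous_const.add (continuous_apply i)))
    (tendsto_ciSup_comp_add_cocompact (norm_le_valFun A B hK) a)
  have hbdd : BddBelow (Set.range fun u => ⨆ i, valFun A B (step A B x u i)) :=
    ⟨0, Set.forall_mem_range.2 fun u =>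
      Real.iSup_nonneg fun i => (norm_nonneg _).trans (norm_le_valFun A B hK _)⟩
  exact ⟨u₀, le_antisymm (le_ciInf fun u => hu₀ u) (ciInf_le hbdd u₀)⟩

end RealValue

theorem valFun_bellman_general {n m : ℕ} {S : Type*} [Fintype S] [Nonempty S]
    (A : S → Matrix (Fin n) (Fin n) ℝ) (B : S → Matrix (Fin n) (Fin m) ℝ)
    (C γ : ℝ) (hγ : γ ∈ Set.Ico (0 : ℝ) 1)
    (Ψ : List (EuclideanSpace ℝ (Fin n)) → List S → EuclideanSpace ℝ (Fin m))
    (hΨ : ∀ (x0 : EuclideanSpace ℝ (Fin n)) (σ : ℕ → S) (k : ℕ),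
      ‖memTraj A B Ψ x0 σ k‖ ≤ C * γ ^ k * ‖x0‖) :
    ∀ x : EuclideanSpace ℝ (Fin n),
      (valFun A B x = ‖x‖ +
        ⨅ u : EuclideanSpace ℝ (Fin m),
          ⨆ i : S, valFun A B (WithLp.toLp 2 ((A i).mulVec x + (B i).mulVec u))) ∧
      ∃ ustar : EuclideanSpace ℝ (Fin m),
        (⨆ i : S, valFun A B (WithLp.toLp 2 ((A i).mulVec x + (B i).mulVec ustar))) =
        ⨅ u : EuclideanSpace ℝ (Fin m),
          ⨆ i : S, valFun A B (WithLp.toLp 2 ((A i).mulVec x + (B i).mulVec u)) := by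
  obtain ⟨K, hK⟩ := exists_cost_le_of_norm_memTraj_le A B hγ hΨ
  exact fun x => ⟨valFun_eq_norm_add_iInf_iSup A B hK x, exists_iSup_valFun_step_eq_iInf A B hK x⟩

/-- Under exponential stabilizability by a memory controller,
the value function satisfies the Bellman equation
`V(x) = ‖x‖ + min_u max_i V(A_i x + B_i u)`, the minimum being attained. -/
theorem valFun_bellman {n m : ℕ} (hn : 0 < n) (hm : 0 < m) {S : Type*} [Fintype S] [Nonempty S]
    (A : S → Matrix (Fin n) (Fin n) ℝ) (B : S → Matrix (Fin n) (Fin m) ℝ)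
    (C γ : ℝ) (hC : 1 < C) (hγ : γ ∈ Set.Ico (0 : ℝ) 1)
    (Ψ : List (EuclideanSpace ℝ (Fin n)) → List S → EuclideanSpace ℝ (Fin m))
    (hΨ : ∀ (x0 : EuclideanSpace ℝ (Fin n)) (σ : ℕ → S) (k : ℕ),
      ‖memTraj A B Ψ x0 σ k‖ ≤ C * γ ^ k * ‖x0‖) :
    ∀ x : EuclideanSpace ℝ (Fin n),
      (valFun A B x = ‖x‖ +
        ⨅ u : EuclideanSpace ℝ (Fin m),
          ⨆ i : S, valFun A B (WithLp.toLp 2 ((A i).mulVec x + (B i).mulVec u))) ∧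
      ∃ ustar : EuclideanSpace ℝ (Fin m),
        (⨆ i : S, valFun A B (WithLp.toLp 2 ((A i).mulVec x + (B i).mulVec ustar))) =
        ⨅ u : EuclideanSpace ℝ (Fin m),
          ⨆ i : S, valFun A B (WithLp.toLp 2 ((A i).mulVec x + (B i).mulVec u)) :=
  valFun_bellman_general A B C γ hγ Ψ hΨ
end
end
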